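/- For every C¹ function μ : ℝ → ℝ that is 2L-periodic, one has ∫_{−L}^{L} μ(x)·N(η)ψ(x) dx = −∫_{−L}^{L}∫_{−h}^{η(x)} μ'(x)·φ_x(x,y)·φ_y(x,y) dy dx + (1/2)∫_{−L}^{L} μ(x)·φ_x(x,−h)² dx. -/

import Mathlib

open Real Set MeasureTheory intervalIntegral

noncomputable section

/-- Horizontal derivative of the (time-independent) velocity potential. -/
def phiX (φ : ℝ → ℝ → ℝ) (x y : ℝ) : ℝ := deriv (fun x' => φ x' y) x

/-- Vertical derivative of the (time-independent) velocity potential. -/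
def phiY (φ : ℝ → ℝ → ℝ) (x y : ℝ) : ℝ := deriv (fun y' => φ x y') y

/-- The Dirichlet-to-Neumann expression `G(η)ψ` in the stationary setting. -/
def DN (η : ℝ → ℝ) (φ : ℝ → ℝ → ℝ) (x : ℝ) : ℝ :=
  phiY φ x (η x) - deriv η x * phiX φ x (η x)

/-- The quadratic expression `N(η)ψ` in the stationary setting. -/
def NOp (η : ℝ → ℝ) (φ : ℝ → ℝ → ℝ) (x : ℝ) : ℝ :=
  1/2 * (phiX φ x (η x))^2 - 1/2 * (phiY φ x (η x))^2
    + deriv η x * phiX φ x (η x) * phiY φ x (η x)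

/-!
Let `F x = ∫_{-h}^{η x} φ_x φ_y dy`. By Leibniz's rule,
`F' = ∫_{-h}^{η} ∂_x (φ_x φ_y) dy + η' (φ_x φ_y)(·, η)`. Harmonicity and the symmetry of the
mixed second derivatives give `∂_x (φ_x φ_y) = φ_x φ_xy - φ_y φ_yy = ∂_y ((φ_x² - φ_y²) / 2)`, so
the `y`-integral is a difference of boundary values, and with `φ_y = 0` on the bottom,
`F' = N(η)ψ - φ_x(·, -h)² / 2`. Integrating `μ F'` by parts over a period, the boundary terms
cancel by periodicity.
-/

open Function

section Leibniz

variable {G G' : ℝ → ℝ → ℝ}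

theorem hasDerivAt_intervalIntegral_param (hG : Continuous (uncurry G))
    (hG' : Continuous (uncurry G')) (hGx : ∀ x y, HasDerivAt (G · y) (G' x y) x) (a b x₀ : ℝ) :
    HasDerivAt (fun x => ∫ y in a..b, G x y) (∫ y in a..b, G' x₀ y) x₀ := by
  obtain ⟨C, hC⟩ := ((isCompact_closedBall x₀ 1).prod
    (isCompact_uIcc (a := a) (b := b))).exists_bound_of_continuousOn hG'.continuousOn
  exact (hasDerivAt_integral_of_dominated_loc_of_deriv_le (bound := fun _ => C)
    (Metric.closedBall_mem_nhds x₀ one_pos)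
    (.of_forall fun x => (hG.uncurry_left x).aestronglyMeasurable)
    ((hG.uncurry_left x₀).intervalIntegrable a b) (hG'.uncurry_left x₀).aestronglyMeasurable
    (ae_of_all _ fun y hy x hx => hC (x, y) ⟨hx, uIoc_subset_uIcc hy⟩) intervalIntegrable_const
    (ae_of_all _ fun y _ x _ => hGx x y)).2

open ContinuousLinearMap in
theorem hasStrictFDerivAt_intervalIntegral_param_upper (hG : Continuous (uncurry G))
    (hG' : Continuous (uncurry G')) (hGx : ∀ x y, HasDerivAt (G · y) (G' x y) x) (a : ℝ)
    (p : ℝ × ℝ) :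
    HasStrictFDerivAt (fun q : ℝ × ℝ => ∫ y in a..q.2, G q.1 y)
      ((toSpanSingleton ℝ (∫ y in a..p.2, G' p.1 y)).coprod (toSpanSingleton ℝ (G p.1 p.2))) p :=
  hasStrictFDerivAt_uncurry_coprod (f := fun x t => ∫ y in a..t, G x y)
    (f₁ := fun x t => toSpanSingleton ℝ (∫ y in a..t, G' x y))
    (f₂ := fun x t => toSpanSingleton ℝ (G x t))
    (.of_forall fun q => hasDerivAt_intervalIntegral_param hG hG' hGx a q.2 q.1)
    (.of_forall fun q => integral_hasDerivAt_right ((hG.uncurry_left q.1).intervalIntegrable _ _)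
      ((hG.uncurry_left q.1).stronglyMeasurableAtFilter _ _) (hG.uncurry_left q.1).continuousAt)
    ((toSpanSingletonLIE ℝ ℝ).continuous.comp
      (continuous_parametric_primitive_of_continuous hG')).continuousAt
    ((toSpanSingletonLIE ℝ ℝ).continuous.comp hG).continuousAt

theorem hasDerivAt_intervalIntegral_param_upper (hG : Continuous (uncurry G))
    (hG' : Continuous (uncurry G')) (hGx : ∀ x y, HasDerivAt (G · y) (G' x y) x) (a : ℝ)
    {b : ℝ → ℝ} {b' x₀ : ℝ} (hb : HasDerivAt b b' x₀) :
    HasDerivAt (fun x => ∫ y in a..b x, G x y)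
      ((∫ y in a..b x₀, G' x₀ y) + b' * G x₀ (b x₀)) x₀ := by
  have := (hasStrictFDerivAt_intervalIntegral_param_upper hG hG' hGx a (x₀, b x₀)).hasFDerivAt
    |>.comp_hasDerivAt x₀ ((hasDerivAt_id x₀).prodMk hb)
  simpa [comp_def, mul_comm] using this

end Leibniz

section Potential

variable {φ : ℝ → ℝ → ℝ}

theorem hasDerivAt_phiX (hφ : Differentiable ℝ (uncurry φ)) (x y : ℝ) :
    HasDerivAt (φ · y) (phiX φ x y) x :=
  ((hφ (x, y)).comp (f := fun x => (x, y)) x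
    (differentiableAt_id.prodMk (differentiableAt_const y))).hasDerivAt

theorem hasDerivAt_phiY (hφ : Differentiable ℝ (uncurry φ)) (x y : ℝ) :
    HasDerivAt (φ x ·) (phiY φ x y) y :=
  ((hφ (x, y)).comp (f := fun y => (x, y)) y
    ((differentiableAt_const x).prodMk differentiableAt_id)).hasDerivAt

theorem uncurry_phiX (hφ : Differentiable ℝ (uncurry φ)) :
    uncurry (phiX φ) = fun p => fderiv ℝ (uncurry φ) p (1, 0) :=
  funext fun p => ((hφ p).hasFDerivAt.comp_hasDerivAt (f := fun x => (x, p.2)) p.1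
    ((hasDerivAt_id p.1).prodMk (hasDerivAt_const p.1 p.2))).deriv

theorem uncurry_phiY (hφ : Differentiable ℝ (uncurry φ)) :
    uncurry (phiY φ) = fun p => fderiv ℝ (uncurry φ) p (0, 1) :=
  funext fun p => ((hφ p).hasFDerivAt.comp_hasDerivAt (f := fun y => (p.1, y)) p.2
    ((hasDerivAt_const p.2 p.1).prodMk (hasDerivAt_id p.2))).deriv

theorem contDiff_uncurry_phiX {m n : WithTop ℕ∞} (hφ : ContDiff ℝ n (uncurry φ))
    (hmn : m + 1 ≤ n) : ContDiff ℝ m (uncurry (phiX φ)) := by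
  rw [uncurry_phiX (hφ.differentiable (zero_lt_one.trans_le (le_add_self.trans hmn)).ne')]
  exact (hφ.fderiv_right hmn).clm_apply contDiff_const

theorem contDiff_uncurry_phiY {m n : WithTop ℕ∞} (hφ : ContDiff ℝ n (uncurry φ))
    (hmn : m + 1 ≤ n) : ContDiff ℝ m (uncurry (phiY φ)) := by
  rw [uncurry_phiY (hφ.differentiable (zero_lt_one.trans_le (le_add_self.trans hmn)).ne')]
  exact (hφ.fderiv_right hmn).clm_apply contDiff_const

theorem phiY_phiX (hφ : ContDiff ℝ 2 (uncurry φ)) (x y : ℝ) :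
    phiY (phiX φ) x y = phiX (phiY φ) x y := by
  have hφ' : Differentiable ℝ (uncurry φ) := hφ.differentiable (by simp)
  have hφ'' : Differentiable ℝ (fderiv ℝ (uncurry φ)) :=
    (hφ.fderiv_right (m := 1) (by norm_num)).differentiable (by simp)
  have hX := (contDiff_uncurry_phiX (m := 1) hφ (by norm_num)).differentiable (by simp)
  have hY := (contDiff_uncurry_phiY (m := 1) hφ (by norm_num)).differentiable (by simp)
  calc phiY (phiX φ) x y
      = fderiv ℝ (fderiv ℝ (uncurry φ)) (x, y) (0, 1) (1, 0) := by
        rw [← uncurry_apply_pair (phiY _), uncurry_phiY hX, uncurry_phiX hφ']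
        simp [fderiv_clm_apply (hφ'' _) (differentiableAt_const _)]
    _ = fderiv ℝ (fderiv ℝ (uncurry φ)) (x, y) (1, 0) (0, 1) :=
        hφ.contDiffAt.isSymmSndFDerivAt (by simp) _ _
    _ = phiX (phiY φ) x y := by
        rw [← uncurry_apply_pair (phiX _), uncurry_phiX hY, uncurry_phiY hφ']
        simp [fderiv_clm_apply (hφ'' _) (differentiableAt_const _)]

theorem phiX_add_period {T : ℝ} (hφ : ∀ x y, φ (x + T) y = φ x y) (x y : ℝ) :
    phiX φ (x + T) y = phiX φ x y := by
  simp only [phiX, ← deriv_comp_add_const, hφ]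

theorem phiY_add_period {T : ℝ} (hφ : ∀ x y, φ (x + T) y = φ x y) (x y : ℝ) :
    phiY φ (x + T) y = phiY φ x y := by
  simp only [phiY, hφ]

theorem continuous_NOp {η : ℝ → ℝ} (hφ : ContDiff ℝ 1 (uncurry φ)) (hη : ContDiff ℝ 1 η) :
    Continuous (NOp η φ) := by
  have hX : Continuous fun x => phiX φ x (η x) :=
    (contDiff_uncurry_phiX (m := 0) hφ (by simp)).continuous.comp
      (continuous_id.prodMk hη.continuous)
  have hY : Continuous fun x => phiY φ x (η x) :=
    (contDiff_uncurry_phiY (m := 0) hφ (by simp)).continuous.comp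
      (continuous_id.prodMk hη.continuous)
  have hη' := hη.continuous_deriv le_rfl
  unfold NOp
  fun_prop

end Potential

section Flux

variable {φ : ℝ → ℝ → ℝ}

theorem hasDerivAt_sq_phiX_sub_sq_phiY (hφ : ContDiff ℝ 2 (uncurry φ)) {x y : ℝ}
    (harm : phiX (phiX φ) x y + phiY (phiY φ) x y = 0) :
    HasDerivAt (fun y => (phiX φ x y ^ 2 - phiY φ x y ^ 2) / 2)
      (phiX (phiX φ * phiY φ) x y) y := by
  have hX := (contDiff_uncurry_phiX (m := 1) hφ (by norm_num)).differentiable (by simp)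
  have hY := (contDiff_uncurry_phiY (m := 1) hφ (by norm_num)).differentiable (by simp)
  have hXY := ((hasDerivAt_phiX hX x y).mul (hasDerivAt_phiX hY x y)).deriv
  refine ((((hasDerivAt_phiY hX x y).pow 2).sub ((hasDerivAt_phiY hY x y).pow 2)).div_const 2
    ).congr_deriv ?_
  rw [show phiX (phiX φ * phiY φ) x y = _ from hXY, ← phiY_phiX hφ]
  push_cast
  linear_combination -phiY φ x y * harm

theorem integral_phiX_phiX_mul_phiY (hφ : ContDiff ℝ 2 (uncurry φ)) {x a b : ℝ} (hab : a ≤ b)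
    (harm : ∀ y ∈ Ioo a b, phiX (phiX φ) x y + phiY (phiY φ) x y = 0) :
    ∫ y in a..b, phiX (phiX φ * phiY φ) x y
      = (phiX φ x b ^ 2 - phiY φ x b ^ 2) / 2 - (phiX φ x a ^ 2 - phiY φ x a ^ 2) / 2 := by
  have hX := (contDiff_uncurry_phiX (m := 0) hφ (by norm_num)).continuous.uncurry_left x
  have hY := (contDiff_uncurry_phiY (m := 0) hφ (by norm_num)).continuous.uncurry_left x
  have hXY : ContDiff ℝ 1 (uncurry (phiX φ * phiY φ)) :=
    (contDiff_uncurry_phiX hφ (by norm_num)).mul (contDiff_uncurry_phiY hφ (by norm_num))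
  exact integral_eq_sub_of_hasDerivAt_of_le hab (by fun_prop)
    (fun y hy => hasDerivAt_sq_phiX_sub_sq_phiY hφ (harm y hy))
    (((contDiff_uncurry_phiX (m := 0) hXY (by simp)).continuous.uncurry_left x).intervalIntegrable _ _)

theorem hasDerivAt_integral_phiX_mul_phiY (hφ : ContDiff ℝ 2 (uncurry φ)) {η : ℝ → ℝ}
    (hη : Differentiable ℝ η) {h : ℝ} (hηh : ∀ x, -h ≤ η x)
    (hharm : ∀ x y, -h < y → y < η x → phiX (phiX φ) x y + phiY (phiY φ) x y = 0)
    (hbot : ∀ x, phiY φ x (-h) = 0) (x : ℝ) :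
    HasDerivAt (fun x => ∫ y in (-h)..(η x), (phiX φ * phiY φ) x y)
      (NOp η φ x - phiX φ x (-h) ^ 2 / 2) x := by
  have hXY : ContDiff ℝ 1 (uncurry (phiX φ * phiY φ)) :=
    (contDiff_uncurry_phiX hφ (by norm_num)).mul (contDiff_uncurry_phiY hφ (by norm_num))
  convert hasDerivAt_intervalIntegral_param_upper hXY.continuous
    (contDiff_uncurry_phiX (m := 0) hXY (by simp)).continuous
    (hasDerivAt_phiX (hXY.differentiable (by simp))) (-h) (hη x).hasDerivAt using 1
  rw [integral_phiX_phiX_mul_phiY hφ (hηh x) fun y hy => hharm x y hy.1 hy.2, hbot, NOp]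
  simp only [Pi.mul_apply]
  ring

end Flux

theorem divergence_identity_general
    (L h : ℝ) (hh : 0 < h)
    (η : ℝ → ℝ) (hη : ContDiff ℝ 2 η) (hηper : ∀ x, η (x + 2*L) = η x)
    (hηlb : ∀ x, -h/2 ≤ η x)
    (φ : ℝ → ℝ → ℝ) (hφ : ContDiff ℝ 2 (Function.uncurry φ))
    (hφper : ∀ x y, φ (x + 2*L) y = φ x y)
    (hharm : ∀ x y : ℝ, -h < y → y < η x →
        deriv (fun x' => phiX φ x' y) x + deriv (fun y' => phiY φ x y') y = 0)
    (hbot : ∀ x : ℝ, phiY φ x (-h) = 0)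
    (μ : ℝ → ℝ) (hμ : ContDiff ℝ 1 μ) (hμper : ∀ x, μ (x + 2*L) = μ x) :
    (∫ x in (-L)..L, μ x * NOp η φ x)
    = -(∫ x in (-L)..L, ∫ y in (-h)..(η x), deriv μ x * phiX φ x y * phiY φ x y)
      + 1/2 * (∫ x in (-L)..L, μ x * (phiX φ x (-h))^2) := by
  set F : ℝ → ℝ := fun x => ∫ y in (-h)..(η x), (phiX φ * phiY φ) x y with hF_def
  have hF : ∀ x, HasDerivAt F (NOp η φ x - phiX φ x (-h) ^ 2 / 2) x :=
    hasDerivAt_integral_phiX_mul_phiY hφ (hη.differentiable (by simp))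
      (fun x => by linarith [hηlb x]) hharm hbot
  have hends : ∀ {f : ℝ → ℝ}, (∀ x, f (x + 2 * L) = f x) → f L = f (-L) := fun hf => by
    rw [← hf (-L), show -L + 2 * L = L by ring]
  have hFper : ∀ x, F (x + 2 * L) = F x := fun x => by
    simp only [hF_def, hηper, Pi.mul_apply, phiX_add_period hφper, phiY_add_period hφper]
  have hN := continuous_NOp (hφ.of_le (by norm_num)) (hη.of_le (by norm_num))
  have hXbot := (contDiff_uncurry_phiX (m := 0) hφ (by norm_num)).continuous.uncurry_right (-h)
  have hμN : IntervalIntegrable (fun x => μ x * NOp η φ x) volume (-L) L :=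
    (hμ.continuous.mul hN).intervalIntegrable _ _
  have hμX : IntervalIntegrable (fun x => 1 / 2 * (μ x * phiX φ x (-h) ^ 2)) volume (-L) L :=
    (continuous_const.mul (hμ.continuous.mul (hXbot.pow 2))).intervalIntegrable _ _
  have hparts := intervalIntegral.integral_mul_deriv_eq_deriv_mul (a := -L) (b := L)
    (fun x _ => (hμ.differentiable (by simp) x).hasDerivAt) (fun x _ => hF x)
    ((hμ.continuous_deriv le_rfl).intervalIntegrable _ _)
    ((hN.sub ((hXbot.pow 2).div_const 2)).intervalIntegrable _ _)
  have hsplit : ∫ x in (-L)..L, μ x * (NOp η φ x - phiX φ x (-h) ^ 2 / 2)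
      = (∫ x in (-L)..L, μ x * NOp η φ x) - 1/2 * ∫ x in (-L)..L, μ x * phiX φ x (-h) ^ 2 := by
    rw [← intervalIntegral.integral_const_mul, ← intervalIntegral.integral_sub hμN hμX]
    exact integral_congr fun x _ => by ring
  rw [hsplit, hends hμper, hends hFper, sub_self, zero_sub] at hparts
  have hinner : ∀ x, ∫ y in (-h)..(η x), deriv μ x * phiX φ x y * phiY φ x y = deriv μ x * F x :=
    fun x => by simp only [hF_def, Pi.mul_apply, mul_assoc, intervalIntegral.integral_const_mul]
  simp_rw [hinner]
  linarith

/-- the divergence identity for `N(η)ψ` (Lemma A.1 of the paper). -/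
theorem divergence_identity
    (L h : ℝ) (hL : 0 < L) (hh : 0 < h)
    (η : ℝ → ℝ) (hη : ContDiff ℝ 2 η) (hηper : ∀ x, η (x + 2*L) = η x)
    (hηeven : ∀ x, η (-x) = η x) (hηlb : ∀ x, -h/2 ≤ η x)
    (φ : ℝ → ℝ → ℝ) (hφ : ContDiff ℝ 2 (Function.uncurry φ))
    (hφper : ∀ x y, φ (x + 2*L) y = φ x y) (hφeven : ∀ x y, φ (-x) y = φ x y)
    (hharm : ∀ x y : ℝ, -h < y → y < η x →
        deriv (fun x' => phiX φ x' y) x + deriv (fun y' => phiY φ x y') y = 0)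
    (hbot : ∀ x : ℝ, phiY φ x (-h) = 0)
    (μ : ℝ → ℝ) (hμ : ContDiff ℝ 1 μ) (hμper : ∀ x, μ (x + 2*L) = μ x) :
    (∫ x in (-L)..L, μ x * NOp η φ x)
    = -(∫ x in (-L)..L, ∫ y in (-h)..(η x), deriv μ x * phiX φ x y * phiY φ x y)
      + 1/2 * (∫ x in (-L)..L, μ x * (phiX φ x (-h))^2) :=
  divergence_identity_general L h hh η hη hηper hηlb φ hφ hφper hharm hbot μ hμ hμper
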